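/- The series Σ_{k=1}^∞ [2k]!!/[2k+1]!! converges; consequently Φ(q) = lim_{s→∞} Φ_s(q) is a well-defined finite positive real number. -/

import Mathlib

open Polynomial Filter

/-- The symmetric q-number `[n] = (q^n - q^{-n})/(q - q⁻¹)`. -/
noncomputable def qnum (q : ℝ) (n : ℕ) : ℝ := (q ^ (n : ℤ) - q ^ (-(n : ℤ))) / (q - q⁻¹)

/-- The q-factorial `[n]! = [1][2]⋯[n]`. -/
noncomputable def qfact (q : ℝ) : ℕ → ℝ
  | 0 => 1
  | n + 1 => qfact q n * qnum q (n + 1)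

/-- The even q-double factorial: `evenDF q n = [2n]!! = [2n][2n-2]⋯[2]`. -/
noncomputable def evenDF (q : ℝ) : ℕ → ℝ
  | 0 => 1
  | n + 1 => qnum q (2 * (n + 1)) * evenDF q n

/-- The odd q-double factorial: `oddDF q n = [2n-1]!! = [2n-1][2n-3]⋯[1]`. -/
noncomputable def oddDF (q : ℝ) : ℕ → ℝ
  | 0 => 1
  | n + 1 => qnum q (2 * n + 1) * oddDF q n

/-- `alphaC q m n = α_{2m-1;n}`, with `α_{-1;n} = 1` and
`α_{2m-1;n} = Σ_{k=2m-1}^{n} [k]·α_{2m-3;k-2}`. -/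
noncomputable def alphaC (q : ℝ) : ℕ → ℕ → ℝ
  | 0, _ => 1
  | m + 1, n => ∑ k ∈ Finset.Icc (2 * m + 1) n, qnum q k * alphaC q m (k - 2)

/-- `betaC q m n = β_{2m;n}`, with `β_{0;n} = 1` and
`β_{2m;n} = Σ_{k=2m}^{n} [k]·β_{2m-2;k-2}`. -/
noncomputable def betaC (q : ℝ) : ℕ → ℕ → ℝ
  | 0, _ => 1
  | m + 1, n => ∑ k ∈ Finset.Icc (2 * m + 2) n, qnum q k * betaC q m (k - 2)

lemma qnum_inv (q : ℝ) (n : ℕ) : qnum q⁻¹ n = qnum q n := by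
  unfold qnum
  rw [inv_inv, inv_zpow', inv_zpow', neg_neg, ← neg_div_neg_eq]
  ring_nf

lemma evenDF_inv (q : ℝ) (n : ℕ) : evenDF q⁻¹ n = evenDF q n := by
  induction n with
  | zero => rfl
  | succ n ih => simp [evenDF, qnum_inv, ih]

lemma oddDF_inv (q : ℝ) (n : ℕ) : oddDF q⁻¹ n = oddDF q n := by
  induction n with
  | zero => rfl
  | succ n ih => simp [oddDF, qnum_inv, ih]

lemma qnum_pos (q : ℝ) (hq : 1 < q) (n : ℕ) (hn : 1 ≤ n) : 0 < qnum q n := by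
  have hd : 0 < q - q⁻¹ := by
    have := inv_lt_one_of_one_lt₀ hq; linarith
  apply div_pos _ hd
  have : q ^ (-(n : ℤ)) < q ^ (n : ℤ) := by
    apply zpow_lt_zpow_right₀ hq
    omega
  linarith

lemma qnum_mul_le (q : ℝ) (hq : 1 < q) (n : ℕ) :
    q * qnum q (n + 1) ≤ qnum q (n + 2) := by
  have hq0 : (0:ℝ) < q := lt_trans one_pos hq
  have hd : 0 < q - q⁻¹ := by
    have := inv_lt_one_of_one_lt₀ hq; linarith
  unfold qnum
  rw [← mul_div_assoc, div_le_div_iff_of_pos_right hd]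
  have e1 : q * q ^ ((n + 1 : ℕ) : ℤ) = q ^ ((n + 2 : ℕ) : ℤ) := by
    rw [show ((n + 2 : ℕ) : ℤ) = 1 + ((n + 1 : ℕ) : ℤ) by push_cast; ring,
      zpow_add₀ hq0.ne', zpow_one]
  have e2 : q * q ^ (-((n + 1 : ℕ) : ℤ)) = q ^ (-(n : ℤ)) := by
    rw [show (-(n : ℤ)) = 1 + -((n + 1 : ℕ) : ℤ) by push_cast; ring,
      zpow_add₀ hq0.ne', zpow_one]
  have e3 : q ^ (-((n + 2 : ℕ) : ℤ)) ≤ q ^ (-(n : ℤ)) :=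
    zpow_le_zpow_right₀ hq.le (by push_cast; omega)
  rw [mul_sub, e1, e2]
  linarith


lemma qnum_one (q : ℝ) (hq : 1 < q) : qnum q 1 = 1 := by
  have hd : 0 < q - q⁻¹ := by
    have := inv_lt_one_of_one_lt₀ hq; linarith
  unfold qnum
  norm_num [zpow_one, zpow_neg]
  exact hd.ne'

lemma oddDF_pos (q : ℝ) (hq : 1 < q) (n : ℕ) : 0 < oddDF q n := by
  induction n with
  | zero => norm_num [oddDF]
  | succ n ih =>
    rw [oddDF]
    exact mul_pos (qnum_pos q hq _ (by omega)) ih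

lemma evenDF_pos (q : ℝ) (hq : 1 < q) (n : ℕ) : 0 < evenDF q n := by
  induction n with
  | zero => norm_num [evenDF]
  | succ n ih =>
    rw [evenDF]
    exact mul_pos (qnum_pos q hq _ (by omega)) ih

lemma key_bound (q : ℝ) (hq : 1 < q) (n : ℕ) :
    evenDF q n ≤ (q⁻¹) ^ n * oddDF q (n + 1) := by
  have hq0 : (0:ℝ) < q := lt_trans one_pos hq
  induction n with
  | zero => simp [evenDF, oddDF, qnum_one q hq]
  | succ n ih =>
    have h2 : qnum q (2 * (n + 1)) ≤ q⁻¹ * qnum q (2 * n + 3) := by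
      rw [le_inv_mul_iff₀ hq0]
      have := qnum_mul_le q hq (2 * n + 1)
      calc q * qnum q (2 * (n + 1)) = q * qnum q (2 * n + 1 + 1) := by ring_nf
        _ ≤ qnum q (2 * n + 1 + 2) := qnum_mul_le q hq (2 * n + 1)
        _ = qnum q (2 * n + 3) := by ring_nf
    calc evenDF q (n + 1) = qnum q (2 * (n + 1)) * evenDF q n := by rw [evenDF]
      _ ≤ qnum q (2 * (n + 1)) * ((q⁻¹) ^ n * oddDF q (n + 1)) :=
          mul_le_mul_of_nonneg_left ih (qnum_pos q hq _ (by omega)).le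
      _ ≤ (q⁻¹ * qnum q (2 * n + 3)) * ((q⁻¹) ^ n * oddDF q (n + 1)) := by
          exact mul_le_mul_of_nonneg_right h2
            (mul_nonneg (by positivity) (oddDF_pos q hq _).le)
      _ = (q⁻¹) ^ (n + 1) * (qnum q (2 * (n + 1) + 1) * oddDF q (n + 1)) := by
          rw [show 2 * (n + 1) + 1 = 2 * n + 3 by ring]; ring
      _ = (q⁻¹) ^ (n + 1) * oddDF q (n + 2) := by conv_rhs => rw [oddDF]

lemma aux (q : ℝ) (hq : 1 < q) :
    Summable (fun k : ℕ => evenDF q (k + 1) / oddDF q (k + 2)) ∧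
    ∃ L : ℝ, 0 < L ∧
      Tendsto (fun s : ℕ => 1 + ∑ k ∈ Finset.Icc 1 s, evenDF q k / oddDF q (k + 1))
        atTop (nhds L) := by
  have hq0 : (0:ℝ) < q := lt_trans one_pos hq
  have hnn : ∀ k : ℕ, 0 ≤ evenDF q (k + 1) / oddDF q (k + 2) := fun k =>
    (div_pos (evenDF_pos q hq _) (oddDF_pos q hq _)).le
  have hsum : Summable (fun k : ℕ => evenDF q (k + 1) / oddDF q (k + 2)) := by
    have hgeom : Summable (fun k : ℕ => q⁻¹ * (q⁻¹) ^ k) :=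
      (summable_geometric_of_lt_one (by positivity)
        (inv_lt_one_of_one_lt₀ hq)).mul_left _
    refine Summable.of_nonneg_of_le hnn (fun k => ?_) hgeom
    rw [div_le_iff₀ (oddDF_pos q hq _)]
    calc evenDF q (k + 1) ≤ (q⁻¹) ^ (k + 1) * oddDF q (k + 2) := key_bound q hq (k + 1)
      _ = q⁻¹ * (q⁻¹) ^ k * oddDF q (k + 2) := by ring
  refine ⟨hsum, 1 + ∑' k : ℕ, evenDF q (k + 1) / oddDF q (k + 2), ?_, ?_⟩
  · have : 0 ≤ ∑' k : ℕ, evenDF q (k + 1) / oddDF q (k + 2) := tsum_nonneg hnn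
    linarith
  · have h := hsum.hasSum.tendsto_sum_nat
    have he : (fun s : ℕ => 1 + ∑ k ∈ Finset.Icc 1 s, evenDF q k / oddDF q (k + 1))
        = fun s : ℕ => 1 + ∑ k ∈ Finset.range s, evenDF q (k + 1) / oddDF q (k + 2) := by
      funext s
      rw [show Finset.Icc 1 s = Finset.Ico 1 (s + 1) from (Finset.Ico_add_one_right_eq_Icc 1 s).symm,
        Finset.sum_Ico_eq_sum_range]
      simp [add_comm 1]
    rw [he]
    exact tendsto_const_nhds.add h

/-- The series `Σ_{k=1}^∞ [2k]!!/[2k+1]!!` converges; consequently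
`Φ(q) = lim_{s→∞} Φ_s(q)` (with `Φ_s(q) = 1 + Σ_{k=1}^{s} [2k]!!/[2k+1]!!`) is a
well-defined finite positive real number. -/
theorem stmt4 (q : ℝ) (hq : 0 < q) (hq1 : q ≠ 1) :
    Summable (fun k : ℕ => evenDF q (k + 1) / oddDF q (k + 2)) ∧
    ∃ L : ℝ, 0 < L ∧
      Tendsto (fun s : ℕ => 1 + ∑ k ∈ Finset.Icc 1 s, evenDF q k / oddDF q (k + 1))
        atTop (nhds L) := by
  rcases lt_or_gt_of_ne hq1 with h | h
  · have h' : 1 < q⁻¹ := (one_lt_inv₀ hq).mpr h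
    simp only [← evenDF_inv q, ← oddDF_inv q]
    exact aux q⁻¹ h'
  · exact aux q h
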